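/- Let f be convex on ℝ^n with minimizer x*. For the deterministic heavy-ball subgradient method x_{k+1} = x_k − α g_k + β(x_k − x_{k−1}), x_{−1} = x_0, with g_k ∈ ∂f(x_k), ‖g_k‖ ≤ G, 0 < β < 1, and step size α = C/√(t+1), the averaged iterate x̂_t = (1/(t+1))Σ_{k=0}^t x_k satisfies f(x̂_t) − f(x*) ≤ (β/((1−β)(t+1)))(f(x_0) − f(x*)) + ((1−β)‖x_0 − x*‖²)/(2C√(t+1)) + (C G²)/(2(1−β)√(t+1)). -/

import Mathlib

/-!
With `c = β/(1-β)` and `η = α/(1-β)`, the shifted iterate `z_k = x_k + c (x_k - x_{k-1})` follows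
a plain subgradient step `z_{k+1} = z_k - η g_k`. Expanding `‖z_{k+1} - x*‖²` and bounding
`⟪g_k, z_k - x*⟫` from below by the subgradient inequality at `x*` and at `x_{k-1}` shows that
`Φ_k = ‖z_k - x*‖² + 2ηc (f(x_{k-1}) - f(x*))` satisfies
`Φ_{k+1} + 2η (f(x_k) - f(x*)) ≤ Φ_k + η²G²`. Telescoping, dropping `Φ_{t+1} ≥ 0` and applying
Jensen's inequality to the average gives the bound.
-/

open Finset
open scoped InnerProductSpace

section Telescoping

variable {M : Type*} [AddCommMonoid M] [PartialOrder M] [IsOrderedAddMonoid M]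

theorem add_sum_range_le_of_succ_add_le {Φ e : ℕ → M} {b : M}
    (h : ∀ k, Φ (k + 1) + e k ≤ Φ k + b) (m : ℕ) :
    Φ m + ∑ k ∈ range m, e k ≤ Φ 0 + m • b := by
  induction m with
  | zero => simp
  | succ m ih =>
    calc Φ (m + 1) + ∑ k ∈ range (m + 1), e k
        = (Φ (m + 1) + e m) + ∑ k ∈ range m, e k := by rw [sum_range_succ]; abel
      _ ≤ (Φ m + b) + ∑ k ∈ range m, e k := add_le_add (h m) le_rfl
      _ = (Φ m + ∑ k ∈ range m, e k) + b := by abel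
      _ ≤ (Φ 0 + m • b) + b := by gcongr
      _ = Φ 0 + (m + 1) • b := by rw [succ_nsmul]; abel

end Telescoping

theorem ConvexOn.map_inv_card_smul_sum_sub_le {E ι : Type*} [AddCommGroup E] [Module ℝ E]
    {s : Set E} {f : E → ℝ} (hf : ConvexOn ℝ s f) {t : Finset ι} (ht : t.Nonempty)
    {x : ι → E} (hx : ∀ i ∈ t, x i ∈ s) (a : ℝ) :
    f ((#t : ℝ)⁻¹ • ∑ i ∈ t, x i) - a ≤ (∑ i ∈ t, (f (x i) - a)) / #t := by
  have hcard : (0 : ℝ) < #t := by exact_mod_cast ht.card_pos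
  have hjensen : f (∑ i ∈ t, (#t : ℝ)⁻¹ • x i) ≤ ∑ i ∈ t, (#t : ℝ)⁻¹ * f (x i) := by
    refine hf.map_sum_le (fun _ _ => by positivity) ?_ hx
    rw [sum_const, nsmul_eq_mul]
    field_simp
  rw [← smul_sum, ← mul_sum] at hjensen
  rw [sum_sub_distrib, sum_const, nsmul_eq_mul, le_div_iff₀ hcard]
  rw [le_inv_mul_iff₀ hcard] at hjensen
  linarith

section Momentum

variable {E : Type*} [AddCommGroup E] [Module ℝ E]

/-- The ℕ-subtraction `0 - 1 = 0` encodes the convention `x_{-1} = x_0`. -/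
def momentumAux (c : ℝ) (x : ℕ → E) (k : ℕ) : E := x k + c • (x k - x (k - 1))

@[simp]
theorem momentumAux_zero (c : ℝ) (x : ℕ → E) : momentumAux c x 0 = x 0 := by
  simp [momentumAux]

theorem momentumAux_succ_of_heavyBall {x g : ℕ → E} {α β : ℝ} (hβ : β ≠ 1)
    (hx : ∀ k, x (k + 1) = x k - α • g k + β • (x k - x (k - 1))) (k : ℕ) :
    momentumAux (β / (1 - β)) x (k + 1)
      = momentumAux (β / (1 - β)) x k - (α / (1 - β)) • g k := by
  have : 1 - β ≠ 0 := sub_ne_zero.mpr hβ.symm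
  simp only [momentumAux, Nat.add_sub_cancel, hx k]
  match_scalars <;> field_simp <;> ring

end Momentum

section Subgradient

variable {E : Type*} [NormedAddCommGroup E] [InnerProductSpace ℝ E]

theorem sub_le_inner_of_subgradient {f : E → ℝ} {x g : E}
    (hg : ∀ y, f x + ⟪g, y - x⟫_ℝ ≤ f y) (y : E) :
    f x - f y ≤ ⟪g, x - y⟫_ℝ := by
  have := hg y
  rw [← neg_sub x y, inner_neg_right] at this
  linarith

theorem norm_sub_smul_sub_sq_le {z p g : E} (η : ℝ) {G : ℝ} (hg : ‖g‖ ≤ G) :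
    ‖z - η • g - p‖ ^ 2 ≤ ‖z - p‖ ^ 2 - 2 * η * ⟪g, z - p⟫_ℝ + η ^ 2 * G ^ 2 := by
  have hexp : ‖z - η • g - p‖ ^ 2 = ‖z - p‖ ^ 2 - 2 * η * ⟪g, z - p⟫_ℝ + η ^ 2 * ‖g‖ ^ 2 := by
    rw [sub_right_comm, norm_sub_sq_real, norm_smul, real_inner_smul_right, real_inner_comm,
      mul_pow, Real.norm_eq_abs, sq_abs]
    ring
  rw [hexp]
  gcongr

theorem le_inner_momentumAux_sub {f : E → ℝ} {x g : ℕ → E} {c : ℝ} {k : ℕ}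
    (hsub : ∀ y, f (x k) + ⟪g k, y - x k⟫_ℝ ≤ f y) (hc : 0 ≤ c) (p : E) :
    f (x k) - f p + c * (f (x k) - f (x (k - 1))) ≤ ⟪g k, momentumAux c x k - p⟫_ℝ := by
  have hp := sub_le_inner_of_subgradient hsub p
  have hprev := sub_le_inner_of_subgradient hsub (x (k - 1))
  have hsplit : momentumAux c x k - p = (x k - p) + c • (x k - x (k - 1)) := by
    simp only [momentumAux]; abel
  rw [hsplit, inner_add_right, real_inner_smul_right]
  linarith [mul_le_mul_of_nonneg_left hprev hc]

theorem sum_range_sub_le_of_momentumAux {f : E → ℝ} {p : E} {x g : ℕ → E} {c η G : ℝ}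
    (hsub : ∀ k y, f (x k) + ⟪g k, y - x k⟫_ℝ ≤ f y) (hG : ∀ k, ‖g k‖ ≤ G)
    (hmin : ∀ y, f p ≤ f y) (hc : 0 ≤ c) (hη : 0 ≤ η)
    (hz : ∀ k, momentumAux c x (k + 1) = momentumAux c x k - η • g k) (m : ℕ) :
    2 * η * ∑ k ∈ range (m + 1), (f (x k) - f p)
      ≤ ‖x 0 - p‖ ^ 2 + 2 * η * c * (f (x 0) - f p) + (m + 1) * (η ^ 2 * G ^ 2) := by
  let Φ : ℕ → ℝ := fun k => ‖momentumAux c x k - p‖ ^ 2 + 2 * η * c * (f (x (k - 1)) - f p)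
  have hstep : ∀ k, Φ (k + 1) + 2 * η * (f (x k) - f p) ≤ Φ k + η ^ 2 * G ^ 2 := by
    intro k
    have hdist := norm_sub_smul_sub_sq_le (z := momentumAux c x k) (p := p) η (hG k)
    have hinner := le_inner_momentumAux_sub (hsub k) hc p
    simp only [Φ, hz k, Nat.add_sub_cancel]
    linarith [mul_le_mul_of_nonneg_left hinner hη]
  have hΦ : 0 ≤ Φ (m + 1) := by
    have := sub_nonneg.mpr (hmin (x (m + 1 - 1)))
    positivity
  have htel := add_sum_range_le_of_succ_add_le hstep (m + 1)
  simp only [Φ, momentumAux_zero, Nat.zero_sub, Nat.add_sub_cancel, nsmul_eq_mul] at htel hΦ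
  push_cast at htel
  rw [mul_sum]
  linarith

theorem average_sub_le_of_momentumAux {f : E → ℝ} {p : E} {x g : ℕ → E} {c η G : ℝ}
    (hsub : ∀ k y, f (x k) + ⟪g k, y - x k⟫_ℝ ≤ f y) (hG : ∀ k, ‖g k‖ ≤ G)
    (hmin : ∀ y, f p ≤ f y) (hc : 0 ≤ c) (hη : 0 < η)
    (hz : ∀ k, momentumAux c x (k + 1) = momentumAux c x k - η • g k) (m : ℕ) :
    (∑ k ∈ range (m + 1), (f (x k) - f p)) / (m + 1)
      ≤ c / (m + 1) * (f (x 0) - f p) + ‖x 0 - p‖ ^ 2 / (2 * η * (m + 1)) + η * G ^ 2 / 2 := by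
  have hsum := sum_range_sub_le_of_momentumAux hsub hG hmin hc hη.le hz m
  have hrhs : c / (m + 1) * (f (x 0) - f p) + ‖x 0 - p‖ ^ 2 / (2 * η * (m + 1)) + η * G ^ 2 / 2
      = (‖x 0 - p‖ ^ 2 + 2 * η * c * (f (x 0) - f p) + (m + 1) * (η ^ 2 * G ^ 2))
        / (2 * η) / (m + 1) := by
    field_simp
    ring
  rw [hrhs]
  gcongr
  rwa [le_div_iff₀' (by positivity)]

end Subgradient

theorem heavy_ball_averaged_convergence_general (n : ℕ)
    (f : EuclideanSpace ℝ (Fin n) → ℝ) (hf : ConvexOn ℝ Set.univ f)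
    (xstar : EuclideanSpace ℝ (Fin n)) (hmin : ∀ y, f xstar ≤ f y)
    (t : ℕ) (C G α β : ℝ) (hC : 0 < C)
    (hβ0 : 0 < β) (hβ1 : β < 1)
    (hα : α = C / Real.sqrt (t + 1))
    (x g : ℕ → EuclideanSpace ℝ (Fin n))
    (hsub : ∀ k, ∀ y, f (x k) + ⟪g k, y - x k⟫_ℝ ≤ f y)   -- g_k ∈ ∂f(x_k)
    (hGk : ∀ k, ‖g k‖ ≤ G)
    (hx0 : x 1 = x 0 - α • g 0)   -- the k = 0 step, using x_{-1} = x_0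
    (hx : ∀ k ≥ 1, x (k + 1) = x k - α • g k + β • (x k - x (k - 1)))
    (xhat : EuclideanSpace ℝ (Fin n))
    (hxhat : xhat = (1 / ((t : ℝ) + 1)) • ∑ k ∈ Finset.range (t + 1), x k) :
    f xhat - f xstar ≤
      (β / ((1 - β) * (t + 1))) * (f (x 0) - f xstar)
      + ((1 - β) * ‖x 0 - xstar‖ ^ 2) / (2 * C * Real.sqrt (t + 1))
      + (C * G ^ 2) / (2 * (1 - β) * Real.sqrt (t + 1)) := by
  have hβ' : 0 < 1 - β := sub_pos.mpr hβ1
  have hα0 : 0 < α := by rw [hα]; positivity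
  have hrec : ∀ k, x (k + 1) = x k - α • g k + β • (x k - x (k - 1)) := by
    rintro (_ | k)
    · simpa using hx0
    · exact hx (k + 1) k.succ_pos
  have hjensen := hf.map_inv_card_smul_sum_sub_le (t := range (t + 1)) nonempty_range_add_one
    (fun k _ => Set.mem_univ (x k)) (f xstar)
  have haverage := average_sub_le_of_momentumAux (p := xstar) hsub hGk hmin
    (div_nonneg hβ0.le hβ'.le) (by positivity : 0 < α / (1 - β))
    (momentumAux_succ_of_heavyBall hβ1.ne hrec) t
  rw [card_range, Nat.cast_add_one, ← one_div, ← hxhat] at hjensen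
  refine hjensen.trans (haverage.trans_eq ?_)
  have hs2 : Real.sqrt (t + 1) ^ 2 = t + 1 := Real.sq_sqrt (by positivity)
  have hs : 0 < Real.sqrt (t + 1) := by positivity
  rw [hα]
  generalize Real.sqrt (t + 1) = s at hs hs2 ⊢
  rw [← hs2]
  field_simp

/-- Deterministic special case of Theorem 1 (Convergence of FSG): convergence rate of the
averaged iterate of the heavy-ball subgradient method with step size `α = C/√(t+1)`. -/
theorem heavy_ball_averaged_convergence (n : ℕ)
    (f : EuclideanSpace ℝ (Fin n) → ℝ) (hf : ConvexOn ℝ Set.univ f)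
    (xstar : EuclideanSpace ℝ (Fin n)) (hmin : ∀ y, f xstar ≤ f y)
    (t : ℕ) (C G α β : ℝ) (hC : 0 < C) (hG : 0 < G)
    (hβ0 : 0 < β) (hβ1 : β < 1)
    (hα : α = C / Real.sqrt (t + 1))
    (x g : ℕ → EuclideanSpace ℝ (Fin n))
    (hsub : ∀ k, ∀ y, f (x k) + ⟪g k, y - x k⟫_ℝ ≤ f y)   -- g_k ∈ ∂f(x_k)
    (hGk : ∀ k, ‖g k‖ ≤ G)
    (hx0 : x 1 = x 0 - α • g 0)   -- the k = 0 step, using x_{-1} = x_0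
    (hx : ∀ k ≥ 1, x (k + 1) = x k - α • g k + β • (x k - x (k - 1)))
    (xhat : EuclideanSpace ℝ (Fin n))
    (hxhat : xhat = (1 / ((t : ℝ) + 1)) • ∑ k ∈ Finset.range (t + 1), x k) :
    f xhat - f xstar ≤
      (β / ((1 - β) * (t + 1))) * (f (x 0) - f xstar)
      + ((1 - β) * ‖x 0 - xstar‖ ^ 2) / (2 * C * Real.sqrt (t + 1))
      + (C * G ^ 2) / (2 * (1 - β) * Real.sqrt (t + 1)) :=
  heavy_ball_averaged_convergence_general n f hf xstar hmin t C G α β hC hβ0 hβ1 hα x g hsub hGk hx0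
    hx xhat hxhat
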